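/- If there exists an integer-valued (or nonnegative real-valued) weight function μ on arcs such that ∑_k l^μ(s_k, t_k) · d_k > ∑_{(i,j) ∈ A} μ_{ij} u_{ij}, where l^μ(s_k, t_k) is the μ-shortest-path distance from s_k to t_k, then the multi-commodity flow problem is infeasible. Equivalently (cut condition, Japanese theorem): for any feasible multi-commodity flow and any nonnegative arc weights μ, ∑_k l^μ(s_k, t_k) d_k ≤ ∑_{(i,j)} μ_{ij} u_{ij}. -/
import Mathlib


open Finset

/-- `IsPath tail head p s t` : the list of arcs `p` forms a path from `s` to `t`. -/
def IsPath {V A : Type*} (tail head : A → V) : List A → V → V → Prop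
  | [], s, t => s = t
  | a :: p, s, t => tail a = s ∧ IsPath tail head p (head a) t

/-- Flow conservation. -/
def Conserves {V A : Type*} [Fintype A] [DecidableEq V]
    (tail head : A → V) (s t : V) (d : ℝ) (g : A → ℝ) : Prop :=
  ∀ i : V,
    (∑ a ∈ Finset.univ.filter fun a => tail a = i, g a)
      - (∑ a ∈ Finset.univ.filter fun a => head a = i, g a)
      = if i = s then d else if i = t then -d else 0

lemma isPath_append {V A : Type*} (tail head : A → V) (a : A) :
    ∀ (p : List A) (x : V), IsPath tail head p x (tail a) →
      IsPath tail head (p ++ [a]) x (head a)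
  | [], x, h => by
      simp only [List.nil_append]
      exact ⟨h.symm, rfl⟩
  | b :: p, x, h => by
      obtain ⟨h1, h2⟩ := h
      exact ⟨h1, isPath_append tail head a p _ h2⟩

/-- cut condition / Japanese theorem: for any feasible
multi-commodity flow and any nonnegative arc weights μ,
∑_k l^μ(s_k,t_k) d_k ≤ ∑_a μ_a u_a, where l^μ(s_k,t_k) is bounded above by the
μ-length of every s_k–t_k path. -/
theorem stmt7 {V A K : Type*} [Fintype V] [Fintype A] [Fintype K]
    [DecidableEq V]
    (tail head : A → V) (u : A → ℝ) (s t : K → V) (d : K → ℝ)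
    (μ : A → ℝ) (l : K → ℝ) (f : K → A → ℝ)
    (hu : ∀ a, 0 ≤ u a) (hd : ∀ k, 0 ≤ d k) (hμ : ∀ a, 0 ≤ μ a)
    (hf0 : ∀ k a, 0 ≤ f k a)
    (hcons : ∀ k, Conserves tail head (s k) (t k) (d k) (f k))
    (hcap : ∀ a, (∑ k, f k a) ≤ u a)
    (hl : ∀ k, ∀ p : List A, IsPath tail head p (s k) (t k) →
      l k ≤ (p.map μ).sum) :
    ∑ k, l k * d k ≤ ∑ a, μ a * u a := by
  have key : ∀ k, l k * d k ≤ ∑ a, μ a * f k a := by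
    intro k
    set g := f k with hg
    have hgnn : ∀ a, 0 ≤ g a := hf0 k
    -- trivial case d k = 0
    rcases eq_or_lt_of_le (hd k) with hdz | hdpos
    · rw [← hdz, mul_zero]
      exact Finset.sum_nonneg fun a _ => mul_nonneg (hμ a) (hgnn a)
    -- s k ≠ t k, since otherwise summing conservation gives d k = 0
    have hst : s k ≠ t k := by
      intro hst
      have hsum := Finset.sum_congr rfl (fun v (_ : v ∈ (univ : Finset V)) => hcons k v)
      rw [Finset.sum_sub_distrib, Finset.sum_fiberwise, Finset.sum_fiberwise,
        sub_self] at hsum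
      have hrhs : ∑ v : V, (if v = s k then d k else if v = t k then -d k else 0) = d k := by
        have : ∀ v : V, (if v = s k then d k else if v = t k then -d k else 0)
            = if v = s k then d k else 0 := by
          intro v
          by_cases h1 : v = s k
          · simp [h1]
          · have h2 : v ≠ t k := fun h => h1 (h.trans hst.symm)
            simp [h1, h2]
        rw [Finset.sum_congr rfl fun v _ => this v, Finset.sum_ite_eq']
        simp
      rw [hrhs] at hsum
      exact absurd hsum.symm (ne_of_gt hdpos)
    -- potential function
    set T : V → Set ℝ := fun v =>
      insert (l k) {x | ∃ p : List A, IsPath tail head p (s k) v ∧ (p.map μ).sum = x} with hT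
    set π : V → ℝ := fun v => sInf (T v) with hπ
    have hbdd : ∀ v, BddBelow (T v) := by
      intro v
      refine ⟨min (l k) 0, ?_⟩
      rintro x (rfl | ⟨p, hp, rfl⟩)
      · exact min_le_left _ _
      · refine le_trans (min_le_right _ _) (List.sum_nonneg ?_)
        intro y hy
        obtain ⟨a, _, rfl⟩ := List.mem_map.1 hy
        exact hμ a
    have hne : ∀ v, (T v).Nonempty := fun v => ⟨l k, Set.mem_insert _ _⟩
    have hπle : ∀ v x, x ∈ T v → π v ≤ x := fun v x hx => csInf_le (hbdd v) hx
    have h1 : ∀ a, π (head a) ≤ π (tail a) + μ a := by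
      intro a
      rw [← sub_le_iff_le_add]
      apply le_csInf (hne _)
      rintro x (rfl | ⟨p, hp, rfl⟩)
      · have := hπle (head a) (l k) (Set.mem_insert _ _)
        linarith [hμ a]
      · have hx := hπle (head a) (((p ++ [a]).map μ).sum)
          (Set.mem_insert_of_mem _ ⟨p ++ [a], isPath_append tail head a p _ hp, rfl⟩)
        rw [List.map_append, List.sum_append] at hx
        simp only [List.map_cons, List.map_nil, List.sum_cons, List.sum_nil, add_zero] at hx
        linarith
    have h2 : l k ≤ π (t k) := by
      apply le_csInf (hne _)
      rintro x (rfl | ⟨p, hp, rfl⟩)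
      · exact le_refl _
      · exact hl k p hp
    have h3 : π (s k) ≤ 0 := by
      refine hπle _ 0 (Set.mem_insert_of_mem _ ⟨[], rfl, rfl⟩)
    -- the key summation identity
    have hhead : ∑ a, π (head a) * g a
        = ∑ v, π v * ∑ a ∈ univ.filter fun a => head a = v, g a := by
      rw [← Finset.sum_fiberwise univ head (fun a => π (head a) * g a)]
      refine Finset.sum_congr rfl fun v _ => ?_
      rw [Finset.mul_sum]
      refine Finset.sum_congr rfl fun a ha => ?_
      rw [(Finset.mem_filter.1 ha).2]
    have htail : ∑ a, π (tail a) * g a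
        = ∑ v, π v * ∑ a ∈ univ.filter fun a => tail a = v, g a := by
      rw [← Finset.sum_fiberwise univ tail (fun a => π (tail a) * g a)]
      refine Finset.sum_congr rfl fun v _ => ?_
      rw [Finset.mul_sum]
      refine Finset.sum_congr rfl fun a ha => ?_
      rw [(Finset.mem_filter.1 ha).2]
    have hident : ∑ a, (π (head a) - π (tail a)) * g a = (π (t k) - π (s k)) * d k := by
      have e1 : ∑ a, (π (head a) - π (tail a)) * g a
          = ∑ v, π v * (-(if v = s k then d k else if v = t k then -d k else 0)) := by
        simp only [sub_mul]
        rw [Finset.sum_sub_distrib, hhead, htail, ← Finset.sum_sub_distrib]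
        refine Finset.sum_congr rfl fun v _ => ?_
        rw [← mul_sub, ← neg_sub, ← hcons k v]
      rw [e1]
      have e2 : ∀ v : V, π v * (-(if v = s k then d k else if v = t k then -d k else 0))
          = (if v = s k then -(π v * d k) else 0) + (if v = t k then π v * d k else 0) := by
        intro v
        by_cases hv1 : v = s k
        · subst hv1
          rw [if_pos rfl, if_pos rfl, if_neg hst]
          ring
        · by_cases hv2 : v = t k
          · subst hv2
            rw [if_neg hv1, if_pos rfl, if_neg hv1, if_pos rfl]
            ring
          · rw [if_neg hv1, if_neg hv2, if_neg hv1, if_neg hv2]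
            ring
      rw [Finset.sum_congr rfl fun v _ => e2 v, Finset.sum_add_distrib,
        Finset.sum_ite_eq', Finset.sum_ite_eq']
      simp
      ring
    calc l k * d k ≤ (π (t k) - π (s k)) * d k := by
          apply mul_le_mul_of_nonneg_right _ (hd k)
          linarith
      _ = ∑ a, (π (head a) - π (tail a)) * g a := hident.symm
      _ ≤ ∑ a, μ a * g a := by
          refine Finset.sum_le_sum fun a _ => ?_
          exact mul_le_mul_of_nonneg_right (by linarith [h1 a]) (hgnn a)
  calc ∑ k, l k * d k ≤ ∑ k, ∑ a, μ a * f k a := Finset.sum_le_sum fun k _ => key k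
    _ = ∑ a, μ a * ∑ k, f k a := by
        rw [Finset.sum_comm]
        exact Finset.sum_congr rfl fun a _ => (Finset.mul_sum _ _ _).symm
    _ ≤ ∑ a, μ a * u a := Finset.sum_le_sum fun a _ =>
        mul_le_mul_of_nonneg_left (hcap a) (hμ a)
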